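/- arXiv:2309.15738 — 2 statements merged into one kernel-verified Lean document; each statement's English description precedes it below -/
import Mathlib

section
/- Let ν > 0, k ≥ 1 an integer, T > 0, let V, U : [0,T]×𝕋 → ℝ be C¹ in y with the comparability C_*^{-1}|∂_y U| ≤ |∂_y V| ≤ C_*|∂_y U| for some C_* > 1, and let f be a smooth solution of the k-mode equation ∂_t f + i k V f = ν ∂_y² f on [0,T]×𝕋. Set ε = ν/k and φ(t) = min(ν^{1/2}k^{1/2}t, 1). Then for any α, β > 0 and every t ∈ [0,T] with t ≠ ν^{−1/2}k^{−1/2}: 𝕋_α := α ε^{1/2} d/dt(φ(t)‖∂_y f(t)‖₂²) ≤ α ν (1 + (4α/β) C_*³) ‖∂_y f‖₂² − 2α φ ε^{1/2} ν ‖∂_y² f‖₂² + (β φ²/(4C_*)) k ‖∂_y U f‖₂². -/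
open MeasureTheory Complex Filter Set

/-- time weight φ(t) = min(ν^{1/2} k^{1/2} t, 1) -/
noncomputable def phiW (ν kk t : ℝ) : ℝ := min (ν ^ ((1:ℝ)/2) * kk ^ ((1:ℝ)/2) * t) 1

section Helpers
open intervalIntegral


section Machinery
variable {E : Type*} [NormedAddCommGroup E] [NormedSpace ℝ E]

theorem hasDerivAt_slice_fst {F : ℝ × ℝ → E} (hF : ContDiff ℝ (⊤ : ℕ∞) F) (t y : ℝ) :
    HasDerivAt (fun s => F (s, y)) (fderiv ℝ F (t, y) (1, 0)) t := by
  have h1 : HasDerivAt (fun s : ℝ => (s, y)) ((1 : ℝ), (0 : ℝ)) t :=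
    (hasDerivAt_id t).prodMk (hasDerivAt_const t y)
  exact ((hF.differentiable (by simp) (t, y)).hasFDerivAt).comp_hasDerivAt t h1

theorem hasDerivAt_slice_snd {F : ℝ × ℝ → E} (hF : ContDiff ℝ (⊤ : ℕ∞) F) (t y : ℝ) :
    HasDerivAt (fun z => F (t, z)) (fderiv ℝ F (t, y) (0, 1)) y := by
  have h1 : HasDerivAt (fun z : ℝ => (t, z)) ((0 : ℝ), (1 : ℝ)) y :=
    (hasDerivAt_const y t).prodMk (hasDerivAt_id y)
  exact ((hF.differentiable (by simp) (t, y)).hasFDerivAt).comp_hasDerivAt y h1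

theorem contDiff_pd {F : ℝ × ℝ → E} (hF : ContDiff ℝ (⊤ : ℕ∞) F) (v : ℝ × ℝ) :
    ContDiff ℝ (⊤ : ℕ∞) (fun z => fderiv ℝ F z v) :=
  (hF.fderiv_right (by simp)).clm_apply contDiff_const

theorem clairaut {F : ℝ × ℝ → E} (hF : ContDiff ℝ (⊤ : ℕ∞) F) (z : ℝ × ℝ) (v w : ℝ × ℝ) :
    fderiv ℝ (fun z => fderiv ℝ F z v) z w = fderiv ℝ (fun z => fderiv ℝ F z w) z v := by
  have hd : ∀ x, HasFDerivAt F (fderiv ℝ F x) x := fun x =>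
    (hF.differentiable (by simp) x).hasFDerivAt
  have hd2 : DifferentiableAt ℝ (fderiv ℝ F) z :=
    ((hF.fderiv_right (m := (⊤ : ℕ∞)) (by simp)).differentiable (by simp)) z
  have hsym := second_derivative_symmetric hd hd2.hasFDerivAt v w
  have e1 : ∀ u : ℝ × ℝ, fderiv ℝ (fun z => fderiv ℝ F z u) z
      = (fderiv ℝ (fderiv ℝ F) z).flip u := by
    intro u
    rw [show (fun z => fderiv ℝ F z u) = (fun z => (fderiv ℝ F z) ((fun _ => u) z)) from rfl,
      fderiv_clm_apply hd2 (differentiableAt_const u), fderiv_fun_const]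
    simp
  rw [e1 v, e1 w]
  simpa using hsym.symm

end Machinery

/-- real inner product on ℂ -/
noncomputable def rin (w z : ℂ) : ℝ := w.re * z.re + w.im * z.im

theorem rin_self (w : ℂ) : rin w w = ‖w‖ ^ 2 := by
  rw [rin, ← Complex.normSq_apply, ← Complex.sq_norm]

theorem abs_rin_le (w z : ℂ) : |rin w z| ≤ ‖w‖ * ‖z‖ := by
  have h1 : (rin w z) ^ 2 ≤ (‖w‖ * ‖z‖) ^ 2 := by
    rw [mul_pow, ← rin_self, ← rin_self, rin, rin, rin]
    nlinarith [sq_nonneg (w.re * z.im - w.im * z.re)]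
  have h2 : 0 ≤ ‖w‖ * ‖z‖ := mul_nonneg (norm_nonneg _) (norm_nonneg _)
  exact abs_le_of_sq_le_sq' (by rwa [_root_.sq_abs]) h2 |>.2

theorem hasDerivAt_re' {z : ℝ → ℂ} {z' : ℂ} {s : ℝ} (h : HasDerivAt z z' s) :
    HasDerivAt (fun s => (z s).re) z'.re s :=
  Complex.reCLM.hasFDerivAt.comp_hasDerivAt s h

theorem hasDerivAt_im' {z : ℝ → ℂ} {z' : ℂ} {s : ℝ} (h : HasDerivAt z z' s) :
    HasDerivAt (fun s => (z s).im) z'.im s :=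
  Complex.imCLM.hasFDerivAt.comp_hasDerivAt s h

theorem hasDerivAt_rin {u v : ℝ → ℂ} {u' v' : ℂ} {s : ℝ}
    (hu : HasDerivAt u u' s) (hv : HasDerivAt v v' s) :
    HasDerivAt (fun s => rin (u s) (v s)) (rin u' (v s) + rin (u s) v') s := by
  have : HasDerivAt (fun s => rin (u s) (v s))
      (u'.re * (v s).re + (u s).re * v'.re + (u'.im * (v s).im + (u s).im * v'.im)) s :=
    (((hasDerivAt_re' hu).mul (hasDerivAt_re' hv)).add
    ((hasDerivAt_im' hu).mul (hasDerivAt_im' hv)))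
  convert this using 1
  simp [rin]; ring

theorem hasDerivAt_norm_sq {z : ℝ → ℂ} {z' : ℂ} {s : ℝ} (h : HasDerivAt z z' s) :
    HasDerivAt (fun s => ‖z s‖ ^ 2) (2 * rin z' (z s)) s := by
  have h2 : (fun s => ‖z s‖ ^ 2) = fun s => rin (z s) (z s) := by
    funext x; rw [rin_self]
  rw [h2]
  convert hasDerivAt_rin h h using 1
  simp [rin]; ring

theorem young2 {A B C a b : ℝ} (hA : 0 ≤ A) (hB : 0 ≤ B) (hC : 0 ≤ C)
    (h : A ^ 2 = B * C) (_ha : 0 ≤ a) (_hb : 0 ≤ b) :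
    2 * A * a * b ≤ B * a ^ 2 + C * b ^ 2 := by
  have hAe : A = Real.sqrt B * Real.sqrt C := by
    rw [← Real.sqrt_mul hB, ← h, Real.sqrt_sq hA]
  rw [hAe]
  nlinarith [sq_nonneg (Real.sqrt B * a - Real.sqrt C * b), Real.sq_sqrt hB, Real.sq_sqrt hC,
    Real.sqrt_nonneg B, Real.sqrt_nonneg C]

theorem periodic_deriv' {f : ℝ → ℂ} {c : ℝ} (h : Function.Periodic f c) :
    Function.Periodic (deriv f) c := by
  intro x
  have hfc : (fun y => f (y + c)) = f := funext h
  calc deriv f (x + c) = deriv (fun y => f (y + c)) x := by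
        rw [deriv_comp_add_const]
    _ = deriv f x := by rw [hfc]

theorem par_deriv {F : ℝ × ℝ → ℝ} (hF : Continuous F) {G : ℝ × ℝ → ℝ} (hG : Continuous G)
    (hd : ∀ x y, HasDerivAt (fun s => F (s, y)) (G (x, y)) x) (a b t : ℝ) :
    HasDerivAt (fun s => ∫ y in a..b, F (s, y)) (∫ y in a..b, G (t, y)) t := by
  have hK : IsCompact (Icc (t - 1) (t + 1) ×ˢ uIcc a b) := isCompact_Icc.prod isCompact_uIcc
  obtain ⟨M, hM⟩ := hK.exists_bound_of_continuousOn hG.continuousOn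
  have main := intervalIntegral.hasDerivAt_integral_of_dominated_loc_of_deriv_le
    (F := fun x y => F (x, y)) (F' := fun x y => G (x, y)) (x₀ := t)
    (bound := fun _ => M) (μ := volume) (a := a) (b := b) (s := Metric.ball t 1) (Metric.ball_mem_nhds t one_pos)
    (Filter.Eventually.of_forall fun x =>
      (hF.comp (continuous_const.prodMk continuous_id)).aestronglyMeasurable)
    ((hF.comp (continuous_const.prodMk continuous_id)).intervalIntegrable a b)
    (hG.comp (continuous_const.prodMk continuous_id)).aestronglyMeasurable
    (Filter.Eventually.of_forall fun y hy x hx => by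
      refine hM (x, y) ⟨?_, uIoc_subset_uIcc hy⟩
      have := abs_sub_lt_iff.1 (mem_ball_iff_norm.1 hx)
      constructor <;> linarith [this.1, this.2])
    intervalIntegrable_const
    (Filter.Eventually.of_forall fun y _ x _ => hd x y)
  exact main.2

theorem rin_split (nu kr v' v : ℝ) (w0 w1 w3 : ℂ) :
    rin ((nu : ℂ) * w3 - Complex.I * (kr : ℂ) * ((v' : ℂ) * w0 + (v : ℂ) * w1)) w1
      = nu * rin w3 w1 + kr * v' * rin (-Complex.I * w0) w1 := by
  simp [rin, Complex.mul_re, Complex.mul_im, Complex.sub_re, Complex.sub_im,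
    Complex.add_re, Complex.add_im]
  ring

theorem phiW_hasDerivAt {ν kk t : ℝ} (hc : 0 < ν ^ ((1:ℝ)/2) * kk ^ ((1:ℝ)/2))
    (hne : ν ^ ((1:ℝ)/2) * kk ^ ((1:ℝ)/2) * t ≠ 1) :
    HasDerivAt (phiW ν kk)
      (if ν ^ ((1:ℝ)/2) * kk ^ ((1:ℝ)/2) * t < 1 then ν ^ ((1:ℝ)/2) * kk ^ ((1:ℝ)/2) else 0) t := by
  set c := ν ^ ((1:ℝ)/2) * kk ^ ((1:ℝ)/2) with hcdef
  rcases lt_or_gt_of_ne hne with h | h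
  · rw [if_pos h]
    have hev : phiW ν kk =ᶠ[nhds t] fun s => c * s := by
      have hop : IsOpen {s : ℝ | c * s < 1} := isOpen_lt (by fun_prop) continuous_const
      filter_upwards [hop.mem_nhds h] with s hs
      exact min_eq_left (le_of_lt hs)
    simpa using (((hasDerivAt_id t).const_mul c).congr_of_eventuallyEq hev)
  · rw [if_neg (not_lt.2 h.le)]
    have hev : phiW ν kk =ᶠ[nhds t] fun _ => 1 := by
      have hop : IsOpen {s : ℝ | 1 < c * s} := isOpen_lt continuous_const (by fun_prop)
      filter_upwards [hop.mem_nhds h] with s hs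
      exact min_eq_right (le_of_lt hs)
    exact ((hasDerivAt_const t (1:ℝ)).congr_of_eventuallyEq hev)


end Helpers

theorem alpha_estimate_nondegenerate
    (ν T Cs : ℝ) (k : ℤ) (hν : 0 < ν) (hT : 0 < T) (hk : 1 ≤ k) (hCs : 1 < Cs)
    (V U : ℝ → ℝ → ℝ)
    (hVper : ∀ t ∈ Icc (0:ℝ) T, Function.Periodic (V t) (2 * Real.pi))
    (hUper : ∀ t ∈ Icc (0:ℝ) T, Function.Periodic (U t) (2 * Real.pi))
    (hVy : ∀ t ∈ Icc (0:ℝ) T, ContDiff ℝ 1 (V t))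
    (hUy : ∀ t ∈ Icc (0:ℝ) T, ContDiff ℝ 1 (U t))
    -- comparability C_*⁻¹ |∂_y U| ≤ |∂_y V| ≤ C_* |∂_y U|
    (hcomp : ∀ t ∈ Icc (0:ℝ) T, ∀ y : ℝ,
      Cs⁻¹ * |deriv (U t) y| ≤ |deriv (V t) y| ∧ |deriv (V t) y| ≤ Cs * |deriv (U t) y|)
    (f : ℝ → ℝ → ℂ)
    (hf : ContDiff ℝ (⊤ : ℕ∞) (Function.uncurry f))
    (hfper : ∀ t ∈ Icc (0:ℝ) T, Function.Periodic (f t) (2 * Real.pi))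
    (heq : ∀ t ∈ Icc (0:ℝ) T, ∀ y : ℝ,
      deriv (fun s => f s y) t + Complex.I * (k : ℂ) * (V t y : ℂ) * f t y
        = (ν : ℂ) * deriv (deriv (f t)) y)
    (α β : ℝ) (hα : 0 < α) (hβ : 0 < β)
    (t : ℝ) (ht : t ∈ Icc (0:ℝ) T)
    (ht' : t ≠ ν ^ (-(1:ℝ)/2) * (k:ℝ) ^ (-(1:ℝ)/2)) :
    α * (ν / (k:ℝ)) ^ ((1:ℝ)/2) *
        deriv (fun s => phiW ν (k:ℝ) s *
          ∫ y in Ioc (-Real.pi) Real.pi, ‖deriv (f s) y‖ ^ 2) t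
      ≤ α * ν * (1 + (4 * α / β) * Cs ^ 3) *
            (∫ y in Ioc (-Real.pi) Real.pi, ‖deriv (f t) y‖ ^ 2)
        - 2 * α * phiW ν (k:ℝ) t * (ν / (k:ℝ)) ^ ((1:ℝ)/2) * ν *
            (∫ y in Ioc (-Real.pi) Real.pi, ‖deriv (deriv (f t)) y‖ ^ 2)
        + (β * (phiW ν (k:ℝ) t) ^ 2 / (4 * Cs)) * (k:ℝ) *
            (∫ y in Ioc (-Real.pi) Real.pi, (deriv (U t) y) ^ 2 * ‖f t y‖ ^ 2) := by
  have hπpos := Real.pi_pos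
  have hab : -Real.pi ≤ Real.pi := by linarith
  have hkR : (0:ℝ) < (k:ℝ) := by exact_mod_cast zero_lt_one.trans_le hk
  -- basic derivative bookkeeping
  have hF : ContDiff ℝ (⊤ : ℕ∞) (Function.uncurry f) := hf
  set f1 : ℝ × ℝ → ℂ := fun z => fderiv ℝ (Function.uncurry f) z (0, 1) with hf1def
  have hf1 : ContDiff ℝ (⊤ : ℕ∞) f1 := contDiff_pd hF _
  set f2 : ℝ × ℝ → ℂ := fun z => fderiv ℝ f1 z (0, 1) with hf2def
  have hf2 : ContDiff ℝ (⊤ : ℕ∞) f2 := contDiff_pd hf1 _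
  set f3 : ℝ × ℝ → ℂ := fun z => fderiv ℝ f2 z (0, 1) with hf3def
  set ft : ℝ × ℝ → ℂ := fun z => fderiv ℝ (Function.uncurry f) z (1, 0) with hftdef
  have hft : ContDiff ℝ (⊤ : ℕ∞) ft := contDiff_pd hF _
  set f1t : ℝ × ℝ → ℂ := fun z => fderiv ℝ f1 z (1, 0) with hf1tdef
  have hf1t : ContDiff ℝ (⊤ : ℕ∞) f1t := contDiff_pd hf1 _
  have hD1 : ∀ s y, HasDerivAt (f s) (f1 (s, y)) y := fun s y => hasDerivAt_slice_snd hF s y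
  have hD2 : ∀ s y, HasDerivAt (fun z => f1 (s, z)) (f2 (s, y)) y := fun s y =>
    hasDerivAt_slice_snd hf1 s y
  have hD3 : ∀ s y, HasDerivAt (fun z => f2 (s, z)) (f3 (s, y)) y := fun s y =>
    hasDerivAt_slice_snd hf2 s y
  have hDt : ∀ s y, HasDerivAt (fun s' => f s' y) (ft (s, y)) s := fun s y =>
    hasDerivAt_slice_fst hF s y
  have hder1 : ∀ s, deriv (f s) = fun y => f1 (s, y) := fun s => funext fun y => (hD1 s y).deriv
  have hder2 : ∀ s y, deriv (deriv (f s)) y = f2 (s, y) := fun s y => by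
    rw [hder1 s]; exact (hD2 s y).deriv
  -- the equation at time t
  have heqt : ∀ y, ft (t, y) = (ν : ℂ) * f2 (t, y)
      - (Complex.I * ((k:ℝ) : ℂ)) * ((V t y : ℂ) * f t y) := by
    intro y
    have h0 := heq t ht y
    rw [(hDt t y).deriv, hder2 t y] at h0
    push_cast at h0 ⊢
    linear_combination h0
  -- Clairaut
  have hcl : ∀ z, f1t z = fderiv ℝ ft z (0, 1) := fun z =>
    clairaut hF z ((0:ℝ), (1:ℝ)) ((1:ℝ), (0:ℝ))
  have hDtslice : ∀ y, HasDerivAt (fun z => ft (t, z)) (f1t (t, y)) y := fun y => by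
    rw [hcl (t, y)]; exact hasDerivAt_slice_snd hft t y
  have hVd : ∀ y, HasDerivAt (V t) (deriv (V t) y) y := fun y =>
    (((hVy t ht).differentiable one_ne_zero) y).hasDerivAt
  have hf1t_eq : ∀ y, f1t (t, y) = (ν : ℂ) * f3 (t, y)
      - Complex.I * ((k:ℝ) : ℂ) * ((Complex.ofReal (deriv (V t) y)) * f t y + (V t y : ℂ) * f1 (t, y)) := by
    intro y
    have h1 : (fun z => ft (t, z)) = fun z => (ν : ℂ) * f2 (t, z)
        - (Complex.I * ((k:ℝ) : ℂ)) * ((V t z : ℂ) * f t z) := funext fun z => heqt z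
    have hVc : HasDerivAt (fun z => ((V t z : ℝ) : ℂ)) ((Complex.ofReal (deriv (V t) y))) y :=
      Complex.ofRealCLM.hasFDerivAt.comp_hasDerivAt y (hVd y)
    have hprod : HasDerivAt (fun z => (V t z : ℂ) * f t z)
        ((Complex.ofReal (deriv (V t) y)) * f t y + (V t y : ℂ) * f1 (t, y)) y := hVc.mul (hD1 t y)
    have h2 := ((hD3 t y).const_mul ((ν : ℂ))).sub (hprod.const_mul (Complex.I * ((k:ℝ) : ℂ)))
    have h3 := hDtslice y
    rw [h1] at h3
    exact h3.unique h2
  -- time derivative of the energy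
  set Φ : ℝ × ℝ → ℝ := fun z => ‖f1 z‖ ^ 2 with hΦdef
  set G : ℝ × ℝ → ℝ := fun z => 2 * rin (f1t z) (f1 z) with hGdef
  have hrin_cont : ∀ {u v : ℝ × ℝ → ℂ}, Continuous u → Continuous v →
      Continuous fun z => rin (u z) (v z) := fun hu hv =>
    ((Complex.continuous_re.comp hu).mul (Complex.continuous_re.comp hv)).add
      ((Complex.continuous_im.comp hu).mul (Complex.continuous_im.comp hv))
  have hΦc : Continuous Φ := (hf1.continuous.norm).pow 2
  have hGc : Continuous G := continuous_const.mul (hrin_cont hf1t.continuous hf1.continuous)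
  have hEder : HasDerivAt (fun s => ∫ y in (-Real.pi)..Real.pi, Φ (s, y))
      (∫ y in (-Real.pi)..Real.pi, G (t, y)) t :=
    par_deriv hΦc hGc (fun x y => hasDerivAt_norm_sq (hasDerivAt_slice_fst hf1 x y)) _ _ t
  -- the φ weight
  set c : ℝ := ν ^ ((1:ℝ)/2) * (k:ℝ) ^ ((1:ℝ)/2) with hcdef
  have hcpos : 0 < c := mul_pos (Real.rpow_pos_of_pos hν _) (Real.rpow_pos_of_pos hkR _)
  have hcne : c * t ≠ 1 := by
    intro hcontra
    apply ht'
    have h1 : ν ^ (-(1:ℝ)/2) * (k:ℝ) ^ (-(1:ℝ)/2) = c⁻¹ := by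
      rw [hcdef, mul_inv, show (-(1:ℝ)/2) = -((1:ℝ)/2) by ring,
        Real.rpow_neg hν.le, Real.rpow_neg hkR.le]
    rw [h1]
    field_simp
    linear_combination hcontra
  have hφder := phiW_hasDerivAt (hcdef ▸ hcpos) (hcdef ▸ hcne)
  set φd : ℝ := if c * t < 1 then c else 0 with hφddef
  have hφd0 : 0 ≤ φd := by rw [hφddef]; split <;> simp [hcpos.le]
  have hφdc : φd ≤ c := by rw [hφddef]; split <;> simp [hcpos.le]
  set φ : ℝ := phiW ν (k:ℝ) t with hφdef
  have hφ0 : 0 ≤ φ := le_min (mul_nonneg hcpos.le ht.1) zero_le_one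
  -- rewrite the goal's deriv
  have hfun : (fun s => phiW ν (k:ℝ) s * ∫ y in Ioc (-Real.pi) Real.pi, ‖deriv (f s) y‖ ^ 2)
      = fun s => phiW ν (k:ℝ) s * ∫ y in (-Real.pi)..Real.pi, Φ (s, y) := by
    funext s
    rw [intervalIntegral.integral_of_le hab]
    congr 1
    apply setIntegral_congr_fun measurableSet_Ioc
    intro y _
    simp only [hder1 s, hΦdef]
  have hprodder : HasDerivAt (fun s => phiW ν (k:ℝ) s * ∫ y in (-Real.pi)..Real.pi, Φ (s, y))
      (φd * (∫ y in (-Real.pi)..Real.pi, Φ (t, y)) + φ * ∫ y in (-Real.pi)..Real.pi, G (t, y)) t :=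
    hφder.mul hEder
  rw [hfun, hprodder.deriv]
  -- rewrite RHS integrals
  have hEio : (∫ y in Ioc (-Real.pi) Real.pi, ‖deriv (f t) y‖ ^ 2)
      = ∫ y in (-Real.pi)..Real.pi, Φ (t, y) := by
    rw [intervalIntegral.integral_of_le hab]
    apply setIntegral_congr_fun measurableSet_Ioc
    intro y _; simp only [hder1 t, hΦdef]
  have hDio : (∫ y in Ioc (-Real.pi) Real.pi, ‖deriv (deriv (f t)) y‖ ^ 2)
      = ∫ y in (-Real.pi)..Real.pi, ‖f2 (t, y)‖ ^ 2 := by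
    rw [intervalIntegral.integral_of_le hab]
    apply setIntegral_congr_fun measurableSet_Ioc
    intro y _; simp only [hder2 t]
  have hUio : (∫ y in Ioc (-Real.pi) Real.pi, (deriv (U t) y) ^ 2 * ‖f t y‖ ^ 2)
      = ∫ y in (-Real.pi)..Real.pi, (deriv (U t) y) ^ 2 * ‖f t y‖ ^ 2 :=
    (intervalIntegral.integral_of_le hab).symm
  rw [hEio, hDio, hUio]
  set Et : ℝ := ∫ y in (-Real.pi)..Real.pi, Φ (t, y) with hEtdef
  set Dt : ℝ := ∫ y in (-Real.pi)..Real.pi, ‖f2 (t, y)‖ ^ 2 with hDtdef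
  set Ut : ℝ := ∫ y in (-Real.pi)..Real.pi, (deriv (U t) y) ^ 2 * ‖f t y‖ ^ 2 with hUtdef
  -- continuity of slices
  have hslice : ∀ {E' : Type} [NormedAddCommGroup E'] (g : ℝ × ℝ → E'), Continuous g →
      Continuous fun y => g (t, y) := fun g hg =>
    hg.comp (continuous_const.prodMk continuous_id)
  have hcf : Continuous fun y => f t y := hslice _ hF.continuous
  have hcf1 : Continuous fun y => f1 (t, y) := hslice _ hf1.continuous
  have hcf2 : Continuous fun y => f2 (t, y) := hslice _ hf2.continuous
  have hcf3 : Continuous fun y => f3 (t, y) :=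
    hslice _ (contDiff_pd hf2 ((0:ℝ),(1:ℝ))).continuous
  have hrin_cont' : ∀ {u v : ℝ → ℂ}, Continuous u → Continuous v →
      Continuous fun y => rin (u y) (v y) := fun hu hv =>
    ((Complex.continuous_re.comp hu).mul (Complex.continuous_re.comp hv)).add
      ((Complex.continuous_im.comp hu).mul (Complex.continuous_im.comp hv))
  have hcV' : Continuous (deriv (V t)) := (hVy t ht).continuous_deriv le_rfl
  -- periodicity
  have hper_f : Function.Periodic (f t) (2 * Real.pi) := hfper t ht
  have hper_f1 : Function.Periodic (fun y => f1 (t, y)) (2 * Real.pi) := by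
    have h := periodic_deriv' hper_f
    rwa [hder1 t] at h
  have hper_f2 : Function.Periodic (fun y => f2 (t, y)) (2 * Real.pi) := by
    have h := periodic_deriv' hper_f1
    have e : deriv (fun y => f1 (t, y)) = fun y => f2 (t, y) := funext fun y => (hD2 t y).deriv
    rwa [e] at h
  -- integration by parts
  have hibp : (∫ y in (-Real.pi)..Real.pi, rin (f3 (t, y)) (f1 (t, y))) = -Dt := by
    have hg' : ∀ y, HasDerivAt (fun y => rin (f2 (t, y)) (f1 (t, y)))
        (rin (f3 (t, y)) (f1 (t, y)) + rin (f2 (t, y)) (f2 (t, y))) y :=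
      fun y => hasDerivAt_rin (hD3 t y) (hD2 t y)
    have hint31 : IntervalIntegrable (fun y => rin (f3 (t, y)) (f1 (t, y)))
        volume (-Real.pi) Real.pi := (hrin_cont' hcf3 hcf1).intervalIntegrable _ _
    have hint22 : IntervalIntegrable (fun y => rin (f2 (t, y)) (f2 (t, y)))
        volume (-Real.pi) Real.pi := (hrin_cont' hcf2 hcf2).intervalIntegrable _ _
    have hsum : (∫ y in (-Real.pi)..Real.pi,
          (rin (f3 (t, y)) (f1 (t, y)) + rin (f2 (t, y)) (f2 (t, y))))
        = rin (f2 (t, Real.pi)) (f1 (t, Real.pi))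
          - rin (f2 (t, -Real.pi)) (f1 (t, -Real.pi)) :=
      intervalIntegral.integral_eq_sub_of_hasDerivAt (fun y _ => hg' y) (hint31.add hint22)
    have hzero : rin (f2 (t, Real.pi)) (f1 (t, Real.pi))
        = rin (f2 (t, -Real.pi)) (f1 (t, -Real.pi)) := by
      have hp : Real.pi = -Real.pi + 2 * Real.pi := by ring
      conv_lhs => rw [hp]
      rw [show f2 (t, -Real.pi + 2 * Real.pi) = f2 (t, -Real.pi) from hper_f2 (-Real.pi),
        show f1 (t, -Real.pi + 2 * Real.pi) = f1 (t, -Real.pi) from hper_f1 (-Real.pi)]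
    have h0 : (∫ y in (-Real.pi)..Real.pi, rin (f3 (t, y)) (f1 (t, y)))
        + (∫ y in (-Real.pi)..Real.pi, rin (f2 (t, y)) (f2 (t, y))) = 0 := by
      rw [← intervalIntegral.integral_add hint31 hint22, hsum, hzero]; ring
    have h1 : (∫ y in (-Real.pi)..Real.pi, rin (f2 (t, y)) (f2 (t, y))) = Dt := by
      rw [hDtdef]
      apply intervalIntegral.integral_congr
      intro y _
      simp only [rin_self]
    linarith
  -- pointwise form of the energy derivative integrand
  have hGpt : ∀ y, G (t, y) = 2 * ν * rin (f3 (t, y)) (f1 (t, y))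
      + (k:ℝ) * deriv (V t) y * (2 * rin (-Complex.I * f t y) (f1 (t, y))) := by
    intro y
    have hGapp : G (t, y) = 2 * rin (f1t (t, y)) (f1 (t, y)) := rfl
    rw [hGapp, hf1t_eq y]
    have hs := rin_split ν (k:ℝ) (deriv (V t) y) (V t y) (f t y) (f1 (t, y)) (f3 (t, y))
    linear_combination 2 * hs
  have hEprime : (∫ y in (-Real.pi)..Real.pi, G (t, y)) = -(2 * ν) * Dt
      + ∫ y in (-Real.pi)..Real.pi,
          (k:ℝ) * deriv (V t) y * (2 * rin (-Complex.I * f t y) (f1 (t, y))) := by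
    have hi1 : IntervalIntegrable (fun y => 2 * ν * rin (f3 (t, y)) (f1 (t, y)))
        volume (-Real.pi) Real.pi :=
      (continuous_const.mul (hrin_cont' hcf3 hcf1)).intervalIntegrable _ _
    have hi2 : IntervalIntegrable
        (fun y => (k:ℝ) * deriv (V t) y * (2 * rin (-Complex.I * f t y) (f1 (t, y))))
        volume (-Real.pi) Real.pi :=
      (((continuous_const.mul hcV').mul
        (continuous_const.mul (hrin_cont' (continuous_const.mul hcf) hcf1)))).intervalIntegrable _ _
    rw [intervalIntegral.integral_congr (g := fun y => 2 * ν * rin (f3 (t, y)) (f1 (t, y))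
        + (k:ℝ) * deriv (V t) y * (2 * rin (-Complex.I * f t y) (f1 (t, y))))
        (fun y _ => hGpt y),
      intervalIntegral.integral_add hi1 hi2]
    congr 1
    rw [show (fun y => 2 * ν * rin (f3 (t, y)) (f1 (t, y)))
        = (fun y => (2 * ν) * rin (f3 (t, y)) (f1 (t, y))) from rfl,
      intervalIntegral.integral_const_mul, hibp]
    ring
  set Rt : ℝ := ∫ y in (-Real.pi)..Real.pi,
      (k:ℝ) * deriv (V t) y * (2 * rin (-Complex.I * f t y) (f1 (t, y))) with hRtdef
  set ε' : ℝ := (ν / (k:ℝ)) ^ ((1:ℝ)/2) with hεdef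
  have hε0 : 0 < ε' := Real.rpow_pos_of_pos (div_pos hν hkR) _
  have hsqrtsq : ((ν^2 : ℝ)) ^ ((1:ℝ)/2) = ν := by
    rw [← Real.rpow_natCast ν 2, ← Real.rpow_mul hν.le]
    norm_num
  have hεc : ε' * c = ν := by
    rw [hεdef, hcdef, ← Real.mul_rpow hν.le hkR.le,
      ← Real.mul_rpow (div_nonneg hν.le hkR.le) (mul_nonneg hν.le hkR.le),
      show ν / (k:ℝ) * (ν * (k:ℝ)) = ν ^ 2 from by field_simp, hsqrtsq]
  have hεsq : ε' ^ 2 = ν / (k:ℝ) := by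
    rw [hεdef, ← Real.rpow_natCast _ 2, ← Real.rpow_mul (div_nonneg hν.le hkR.le)]
    norm_num
  -- pointwise Young bound
  have hptwise : ∀ y,
      α * ε' * φ * ((k:ℝ) * deriv (V t) y * (2 * rin (-Complex.I * f t y) (f1 (t, y))))
      ≤ (β * φ ^ 2 * (k:ℝ) / (4 * Cs)) * ((deriv (U t) y) ^ 2 * ‖f t y‖ ^ 2)
        + (4 * α ^ 2 * ν * Cs ^ 3 / β) * ‖f1 (t, y)‖ ^ 2 := by
    intro y
    have hcomp2 := (hcomp t ht y).2
    have hCs0 : (0:ℝ) < Cs := lt_trans zero_lt_one hCs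
    have hnormI : ‖-Complex.I * f t y‖ = ‖f t y‖ := by
      rw [norm_mul]; simp
    have h1 : deriv (V t) y * rin (-Complex.I * f t y) (f1 (t, y))
        ≤ (Cs * |deriv (U t) y|) * (‖f t y‖ * ‖f1 (t, y)‖) := by
      calc deriv (V t) y * rin (-Complex.I * f t y) (f1 (t, y))
          ≤ |deriv (V t) y * rin (-Complex.I * f t y) (f1 (t, y))| := le_abs_self _
        _ = |deriv (V t) y| * |rin (-Complex.I * f t y) (f1 (t, y))| := abs_mul _ _
        _ ≤ (Cs * |deriv (U t) y|) * (‖-Complex.I * f t y‖ * ‖f1 (t, y)‖) :=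
            mul_le_mul hcomp2 (abs_rin_le _ _) (abs_nonneg _)
              (by positivity)
        _ = (Cs * |deriv (U t) y|) * (‖f t y‖ * ‖f1 (t, y)‖) := by rw [hnormI]
    have hA : (0:ℝ) ≤ α * ε' * φ * (k:ℝ) * Cs := by positivity
    have hA2 : (α * ε' * φ * (k:ℝ) * Cs) ^ 2
        = (β * φ ^ 2 * (k:ℝ) / (4 * Cs)) * (4 * α ^ 2 * ν * Cs ^ 3 / β) := by
      calc (α * ε' * φ * (k:ℝ) * Cs) ^ 2
          = ε' ^ 2 * (α ^ 2 * φ ^ 2 * (k:ℝ) ^ 2 * Cs ^ 2) := by ring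
        _ = (ν / (k:ℝ)) * (α ^ 2 * φ ^ 2 * (k:ℝ) ^ 2 * Cs ^ 2) := by rw [hεsq]
        _ = (β * φ ^ 2 * (k:ℝ) / (4 * Cs)) * (4 * α ^ 2 * ν * Cs ^ 3 / β) := by
            field_simp
    have hyoung := young2 hA (by positivity) (by positivity) hA2
      (a := |deriv (U t) y| * ‖f t y‖) (b := ‖f1 (t, y)‖)
      (by positivity) (norm_nonneg _)
    have hchain : α * ε' * φ * ((k:ℝ) * deriv (V t) y * (2 * rin (-Complex.I * f t y) (f1 (t, y))))
        ≤ 2 * (α * ε' * φ * (k:ℝ) * Cs) * (|deriv (U t) y| * ‖f t y‖) * ‖f1 (t, y)‖ := by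
      have hco : (0:ℝ) ≤ 2 * (α * ε' * φ * (k:ℝ)) := by positivity
      calc α * ε' * φ * ((k:ℝ) * deriv (V t) y * (2 * rin (-Complex.I * f t y) (f1 (t, y))))
          = (2 * (α * ε' * φ * (k:ℝ))) * (deriv (V t) y * rin (-Complex.I * f t y) (f1 (t, y))) := by
            ring
        _ ≤ (2 * (α * ε' * φ * (k:ℝ))) * ((Cs * |deriv (U t) y|) * (‖f t y‖ * ‖f1 (t, y)‖)) :=
            mul_le_mul_of_nonneg_left h1 hco
        _ = 2 * (α * ε' * φ * (k:ℝ) * Cs) * (|deriv (U t) y| * ‖f t y‖) * ‖f1 (t, y)‖ := by ring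
    calc α * ε' * φ * ((k:ℝ) * deriv (V t) y * (2 * rin (-Complex.I * f t y) (f1 (t, y))))
        ≤ 2 * (α * ε' * φ * (k:ℝ) * Cs) * (|deriv (U t) y| * ‖f t y‖) * ‖f1 (t, y)‖ := hchain
      _ ≤ (β * φ ^ 2 * (k:ℝ) / (4 * Cs)) * (|deriv (U t) y| * ‖f t y‖) ^ 2
          + (4 * α ^ 2 * ν * Cs ^ 3 / β) * ‖f1 (t, y)‖ ^ 2 := hyoung
      _ = (β * φ ^ 2 * (k:ℝ) / (4 * Cs)) * ((deriv (U t) y) ^ 2 * ‖f t y‖ ^ 2)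
          + (4 * α ^ 2 * ν * Cs ^ 3 / β) * ‖f1 (t, y)‖ ^ 2 := by
            rw [mul_pow, _root_.sq_abs]
  -- integrated bound
  have hRle : α * ε' * φ * Rt ≤ (β * φ ^ 2 * (k:ℝ) / (4 * Cs)) * Ut
      + (4 * α ^ 2 * ν * Cs ^ 3 / β) * Et := by
    have hcU' : Continuous (deriv (U t)) := (hUy t ht).continuous_deriv le_rfl
    have hiL : IntervalIntegrable (fun y => α * ε' * φ *
        ((k:ℝ) * deriv (V t) y * (2 * rin (-Complex.I * f t y) (f1 (t, y)))))
        volume (-Real.pi) Real.pi :=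
      (continuous_const.mul (((continuous_const.mul hcV').mul
        (continuous_const.mul (hrin_cont' (continuous_const.mul hcf) hcf1))))).intervalIntegrable _ _
    have hiR1 : IntervalIntegrable (fun y => (β * φ ^ 2 * (k:ℝ) / (4 * Cs)) *
        ((deriv (U t) y) ^ 2 * ‖f t y‖ ^ 2)) volume (-Real.pi) Real.pi :=
      (continuous_const.mul ((hcU'.pow 2).mul (hcf.norm.pow 2))).intervalIntegrable _ _
    have hiR2 : IntervalIntegrable (fun y => (4 * α ^ 2 * ν * Cs ^ 3 / β) * ‖f1 (t, y)‖ ^ 2)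
        volume (-Real.pi) Real.pi :=
      (continuous_const.mul (hcf1.norm.pow 2)).intervalIntegrable _ _
    have step1 : α * ε' * φ * Rt = ∫ y in (-Real.pi)..Real.pi, α * ε' * φ *
        ((k:ℝ) * deriv (V t) y * (2 * rin (-Complex.I * f t y) (f1 (t, y)))) := by
      rw [hRtdef, ← intervalIntegral.integral_const_mul]
    rw [step1]
    calc (∫ y in (-Real.pi)..Real.pi, α * ε' * φ *
          ((k:ℝ) * deriv (V t) y * (2 * rin (-Complex.I * f t y) (f1 (t, y)))))
        ≤ ∫ y in (-Real.pi)..Real.pi,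
            ((β * φ ^ 2 * (k:ℝ) / (4 * Cs)) * ((deriv (U t) y) ^ 2 * ‖f t y‖ ^ 2)
            + (4 * α ^ 2 * ν * Cs ^ 3 / β) * ‖f1 (t, y)‖ ^ 2) :=
          intervalIntegral.integral_mono_on hab hiL (hiR1.add hiR2) (fun y _ => hptwise y)
      _ = (β * φ ^ 2 * (k:ℝ) / (4 * Cs)) * Ut + (4 * α ^ 2 * ν * Cs ^ 3 / β) * Et := by
          rw [intervalIntegral.integral_add hiR1 hiR2, intervalIntegral.integral_const_mul,
            intervalIntegral.integral_const_mul, hUtdef, hEtdef]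
  -- first term bound
  have hEt0 : 0 ≤ Et := by
    rw [hEtdef]
    apply intervalIntegral.integral_nonneg hab
    intro y _
    exact pow_two_nonneg _
  have h1 : α * ε' * (φd * Et) ≤ α * ν * Et := by
    have hstep : ε' * φd ≤ ν := by
      calc ε' * φd ≤ ε' * c := mul_le_mul_of_nonneg_left hφdc hε0.le
        _ = ν := hεc
    nlinarith [mul_le_mul_of_nonneg_right hstep (mul_nonneg hα.le hEt0)]
  -- final assembly
  rw [hEprime]
  calc α * ε' * (φd * Et + φ * (-(2 * ν) * Dt + Rt))
      = α * ε' * (φd * Et) + (α * ε' * φ) * Rt + (-(2 * α * φ * ε' * ν)) * Dt := by ring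
    _ ≤ α * ν * Et + ((β * φ ^ 2 * (k:ℝ) / (4 * Cs)) * Ut
          + (4 * α ^ 2 * ν * Cs ^ 3 / β) * Et) + (-(2 * α * φ * ε' * ν)) * Dt :=
        add_le_add (add_le_add h1 hRle) le_rfl
    _ = α * ν * (1 + (4 * α / β) * Cs ^ 3) * Et - 2 * α * φ * ε' * ν * Dt
          + (β * φ ^ 2 / (4 * Cs)) * (k:ℝ) * Ut := by
        ring
end

section
/- Let y_* ∈ ℝ, r > 0, 𝔠₀ > 0, and let W : ℝ → ℝ be continuous with |W(y)|² ≥ 𝔠₀^{-1}(y − y_*)² for all y in the ball B_r(y_*). Then for every ε > 0 and every f ∈ H¹(ℝ; ℂ) supported in B_r(y_*): ε^{1/2} ∫_ℝ |f(y)|² dy ≤ (1/2) ε ‖∂_y f‖_{L²(ℝ)}² + 2𝔠₀ ‖W f‖_{L²(ℝ)}². -/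
/-! Integrating by parts against `y - y_*` gives `∫ |f|² = -∫ (y - y_*) ∂_y |f|²`, and
`∂_y |f|² = 2 ⟪f, f'⟫`. Pointwise, Young's inequality bounds `ε^{1/2} · 2 |y - y_*| |f| |f'|` by
`(ε/2) |f'|² + 2 (y - y_*)² |f|²`, and on the support of `f` the lower bound on `W` turns
`(y - y_*)²` into `𝔠₀ W²`. -/

open MeasureTheory

open scoped InnerProductSpace

section

variable {E : Type*} [NormedAddCommGroup E]

theorem HasCompactSupport.norm_sq {α : Type*} [TopologicalSpace α] {f : α → E}
    (hf : HasCompactSupport f) : HasCompactSupport (fun x => ‖f x‖ ^ 2) :=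
  hf.comp_left (g := fun z => ‖z‖ ^ 2) (by simp)

variable [InnerProductSpace ℝ E]

theorem MeasureTheory.MemLp.integrable_inner {α : Type*} [MeasurableSpace α] {μ : Measure α}
    {f g : α → E} (hf : MemLp f 2 μ) (hg : MemLp g 2 μ) :
    Integrable (fun x => ⟪f x, g x⟫_ℝ) μ :=
  memLp_one_iff_integrable.1 <| (innerSL ℝ).memLp_of_bilin 1 hf hg

theorem integrable_sub_mul_two_inner {f f' : ℝ → E} (hf : Continuous f)
    (hcs : HasCompactSupport f) (hf' : MemLp f' 2) (a : ℝ) :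
    Integrable (fun y => (y - a) * (2 * ⟪f y, f' y⟫_ℝ)) := by
  have hmem : MemLp (fun y => (y - a) • f y) 2 :=
    ((continuous_id.sub continuous_const).smul hf).memLp_of_hasCompactSupport hcs.smul_left
  simpa [real_inner_smul_left, mul_left_comm] using (hmem.integrable_inner hf').const_mul 2

theorem integral_norm_sq_eq_neg_integral_sub_mul_two_inner {f f' : ℝ → E}
    (hf : ∀ y, HasDerivAt f (f' y) y) (hcs : HasCompactSupport f) (hf' : MemLp f' 2) (a : ℝ) :
    ∫ y, ‖f y‖ ^ 2 = -∫ y, (y - a) * (2 * ⟪f y, f' y⟫_ℝ) := by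
  have hfc : Continuous f := continuous_iff_continuousAt.2 fun y => (hf y).continuousAt
  have hsq : Continuous (fun y => ‖f y‖ ^ 2) := hfc.norm.pow 2
  have hparts := integral_mul_deriv_eq_deriv_mul_of_integrable
    (u := fun y => y - a) (u' := fun _ => 1) (v := fun y => ‖f y‖ ^ 2)
    (v' := fun y => 2 * ⟪f y, f' y⟫_ℝ)
    (fun y _ => (hasDerivAt_id y).sub_const a) (fun y _ => (hf y).norm_sq)
    (integrable_sub_mul_two_inner hfc hcs hf' a)
    (by simpa [Pi.mul_def] using hsq.integrable_of_hasCompactSupport (μ := volume) hcs.norm_sq)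
    (((continuous_id.sub continuous_const).mul hsq).integrable_of_hasCompactSupport
      hcs.norm_sq.mul_left)
  simp only [one_mul] at hparts
  rw [hparts, neg_neg]

theorem mul_neg_mul_two_inner_le {c s t w : ℝ} (hc : 0 < c) (htw : c⁻¹ * t ^ 2 ≤ w ^ 2)
    (u v : E) :
    s * -(t * (2 * ⟪u, v⟫_ℝ)) ≤ 1 / 2 * s ^ 2 * ‖v‖ ^ 2 + 2 * c * (w ^ 2 * ‖u‖ ^ 2) := by
  have hcauchy : s * -(t * (2 * ⟪u, v⟫_ℝ)) ≤ 2 * (|t| * ‖u‖) * (|s| * ‖v‖) := by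
    calc s * -(t * (2 * ⟪u, v⟫_ℝ)) ≤ |s * -(t * (2 * ⟪u, v⟫_ℝ))| := le_abs_self _
      _ = 2 * |t| * |s| * |⟪u, v⟫_ℝ| := by simp only [abs_mul, abs_neg, abs_two]; ring
      _ ≤ 2 * |t| * |s| * (‖u‖ * ‖v‖) := by gcongr; exact abs_real_inner_le_norm u v
      _ = 2 * (|t| * ‖u‖) * (|s| * ‖v‖) := by ring
  have hamgm (x y : ℝ) : 2 * x * y ≤ 2 * x ^ 2 + 1 / 2 * y ^ 2 := by
    nlinarith [sq_nonneg (2 * x - y)]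
  have htw' : t ^ 2 ≤ c * w ^ 2 := by rwa [inv_mul_le_iff₀ hc] at htw
  have hu := mul_le_mul_of_nonneg_right htw' (sq_nonneg ‖u‖)
  calc s * -(t * (2 * ⟪u, v⟫_ℝ)) ≤ 2 * (|t| * ‖u‖) ^ 2 + 1 / 2 * (|s| * ‖v‖) ^ 2 :=
        hcauchy.trans (hamgm _ _)
    _ = 2 * (t ^ 2 * ‖u‖ ^ 2) + 1 / 2 * s ^ 2 * ‖v‖ ^ 2 := by
        simp only [mul_pow, sq_abs]; ring
    _ ≤ 1 / 2 * s ^ 2 * ‖v‖ ^ 2 + 2 * c * (w ^ 2 * ‖u‖ ^ 2) := by linarith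

end

theorem local_spectral_inequality_general
    (ys r c0 : ℝ) (hc0 : 0 < c0)
    (W : ℝ → ℝ) (hW : Continuous W)
    (hlow : ∀ y ∈ Metric.ball ys r, c0⁻¹ * (y - ys) ^ 2 ≤ (W y) ^ 2)
    (ε : ℝ) (hε : 0 < ε)
    (f : ℝ → ℂ) (hfd : Differentiable ℝ f)
    (hdf2 : MemLp (deriv f) 2 volume)
    (hsupp : Function.support f ⊆ Metric.ball ys r) :
    ε ^ ((1:ℝ)/2) * (∫ y : ℝ, ‖f y‖ ^ 2)
      ≤ (1/2) * ε * (∫ y : ℝ, ‖deriv f y‖ ^ 2)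
        + 2 * c0 * (∫ y : ℝ, (W y) ^ 2 * ‖f y‖ ^ 2) := by
  have hcs : HasCompactSupport f := .of_support_subset_isCompact (isCompact_closedBall ys r)
    (hsupp.trans Metric.ball_subset_closedBall)
  have hs : (ε ^ ((1:ℝ)/2)) ^ 2 = ε := by rw [← Real.sqrt_eq_rpow, Real.sq_sqrt hε.le]
  have hpointwise : ∀ y, ε ^ ((1:ℝ)/2) * -((y - ys) * (2 * ⟪f y, deriv f y⟫_ℝ))
      ≤ 1 / 2 * ε * ‖deriv f y‖ ^ 2 + 2 * c0 * (W y ^ 2 * ‖f y‖ ^ 2) := by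
    intro y
    by_cases hy : f y = 0
    · simp only [hy, inner_zero_left, norm_zero, mul_zero, neg_zero, zero_pow two_ne_zero]
      positivity
    · have hyoung := mul_neg_mul_two_inner_le (s := ε ^ ((1:ℝ)/2)) hc0 (hlow y (hsupp hy))
        (f y) (deriv f y)
      rwa [hs] at hyoung
  have hDf : Integrable (fun y => ‖deriv f y‖ ^ 2) := hdf2.integrable_norm_pow two_ne_zero
  have hWf : Integrable (fun y => W y ^ 2 * ‖f y‖ ^ 2) :=
    ((hW.pow 2).mul (hfd.continuous.norm.pow 2)).integrable_of_hasCompactSupport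
      hcs.norm_sq.mul_left
  calc ε ^ ((1:ℝ)/2) * (∫ y, ‖f y‖ ^ 2)
      = ∫ y, ε ^ ((1:ℝ)/2) * -((y - ys) * (2 * ⟪f y, deriv f y⟫_ℝ)) := by
        rw [integral_norm_sq_eq_neg_integral_sub_mul_two_inner (fun y => (hfd y).hasDerivAt)
          hcs hdf2 ys, ← integral_neg, integral_const_mul]
    _ ≤ ∫ y, (1 / 2 * ε * ‖deriv f y‖ ^ 2 + 2 * c0 * (W y ^ 2 * ‖f y‖ ^ 2)) :=
        integral_mono ((integrable_sub_mul_two_inner hfd.continuous hcs hdf2 ys).neg.const_mul _)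
          ((hDf.const_mul _).add (hWf.const_mul _)) hpointwise
    _ = (1/2) * ε * (∫ y, ‖deriv f y‖ ^ 2) + 2 * c0 * (∫ y, (W y) ^ 2 * ‖f y‖ ^ 2) := by
        rw [integral_add (hDf.const_mul _) (hWf.const_mul _), integral_const_mul,
          integral_const_mul]

theorem local_spectral_inequality
    (ys r c0 : ℝ) (hr : 0 < r) (hc0 : 0 < c0)
    (W : ℝ → ℝ) (hW : Continuous W)
    (hlow : ∀ y ∈ Metric.ball ys r, c0⁻¹ * (y - ys) ^ 2 ≤ (W y) ^ 2)
    (ε : ℝ) (hε : 0 < ε)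
    (f : ℝ → ℂ) (hfd : Differentiable ℝ f)
    (hf2 : MemLp f 2 volume) (hdf2 : MemLp (deriv f) 2 volume)
    (hsupp : Function.support f ⊆ Metric.ball ys r) :
    ε ^ ((1:ℝ)/2) * (∫ y : ℝ, ‖f y‖ ^ 2)
      ≤ (1/2) * ε * (∫ y : ℝ, ‖deriv f y‖ ^ 2)
        + 2 * c0 * (∫ y : ℝ, (W y) ^ 2 * ‖f y‖ ^ 2) :=
  local_spectral_inequality_general ys r c0 hc0 W hW hlow ε hε f hfd hdf2 hsupp
end
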